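/- Let I be an instance with types, γ a signpost sequence, and J ∈ A_γ(Q(I), h). Then there exists an allocation E: C → {0,1} satisfying type parity (A) and, for every party i, Σ_{c∈C_i} E(c) = J_i, if and only if the polytope Z(I, J, γ) is nonempty. -/

import Mathlib

open Finset

/-- A signpost sequence: `γ 0 = 0`, `γ n ∈ [n-1, n]` for `n ≥ 1`, and the
disjunction property. -/
def Signpost (γ : ℕ → ℝ) : Prop :=
  γ 0 = 0 ∧
  (∀ n : ℕ, 1 ≤ n → ((n : ℝ) - 1 ≤ γ n ∧ γ n ≤ n)) ∧
  ((∃ k : ℕ, 2 ≤ k ∧ γ k = (k : ℝ) - 1) → ∀ l : ℕ, 1 ≤ l → γ l < l) ∧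
  ((∃ k : ℕ, 1 ≤ k ∧ γ k = (k : ℝ)) → ∀ l : ℕ, 2 ≤ l → (l : ℝ) - 1 < γ l)

/-- The rounding rule `R_γ` of a signpost sequence, as a set-valued map:
`R_γ(0) = {0}`, `R_γ(t) = {n}` for `t ∈ (γ n, γ (n+1))`, and
`R_γ(t) = {n-1, n}` when `t = γ n > 0`. -/
def roundSet (γ : ℕ → ℝ) (t : ℝ) : Set ℕ :=
  {k | (t = 0 ∧ k = 0) ∨ (γ k < t ∧ t < γ (k + 1)) ∨ (0 < t ∧ (t = γ k ∨ t = γ (k + 1)))}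

/-- The divisor method solution set `A_γ(Q, h)`. -/
def divisorSet (γ : ℕ → ℝ) {n : ℕ} (Q : Fin n → ℝ) (h : ℕ) : Set (Fin n → ℕ) :=
  {S | (∑ i, S i) = h ∧ ∃ lam : ℝ, 0 < lam ∧ ∀ i, S i ∈ roundSet γ (Q i / lam)}

/-- The two candidate types. -/
inductive MType
  | f | m
deriving DecidableEq

instance : Fintype MType :=
  ⟨{MType.f, MType.m}, fun x => by cases x <;> simp⟩

/-- The other type. -/
def MType.other : MType → MType
  | .f => .m
  | .m => .f

/-- An instance of the apportionment problem with type parity: a finite candidate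
set `C`, a party map, a (nonnegative real) vote map, a type map, a house size
`h ≥ 1` and a total order (the field `ord`) refining the votes. -/
structure TypedInstance (n : ℕ) (C : Type) [Fintype C] [DecidableEq C] where
  ord : LinearOrder C
  party : C → Fin n
  votes : C → ℝ
  votes_nonneg : ∀ c, 0 ≤ votes c
  mtype : C → MType
  h : ℕ
  h_pos : 1 ≤ h
  refines : ∀ c c' : C, votes c' < votes c → ord.lt c' c

namespace TypedInstance

variable {n : ℕ} {C : Type} [Fintype C] [DecidableEq C]

/-- The candidates of party `i`. -/
def Ci (I : TypedInstance n C) (i : Fin n) : Finset C :=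
  univ.filter fun c => I.party c = i

/-- The candidates of type `t`. -/
def Ct (I : TypedInstance n C) (t : MType) : Finset C :=
  univ.filter fun c => I.mtype c = t

/-- The candidates of party `i` and type `t`. -/
def Cit (I : TypedInstance n C) (i : Fin n) (t : MType) : Finset C :=
  univ.filter fun c => I.party c = i ∧ I.mtype c = t

/-- The party vote totals `Q(I)`. -/
def Q (I : TypedInstance n C) : Fin n → ℝ := fun i => ∑ c ∈ I.Ci i, I.votes c

/-- The party × type vote totals `P(I)`. -/
def P (I : TypedInstance n C) : Fin n → MType → ℝ := fun i t => ∑ c ∈ I.Cit i t, I.votes c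

/-- The supply matrix `S(I)`. -/
def S (I : TypedInstance n C) : Fin n → MType → ℕ := fun i t => (I.Cit i t).card

/-- The supply condition: `|C_i^t| ≥ ⌈h/2⌉` for every party `i` and type `t`. -/
def SupplyCond (I : TypedInstance n C) : Prop :=
  ∀ (i : Fin n) (t : MType), (I.h + 1) / 2 ≤ (I.Cit i t).card

/-- Type parity condition (A): the numbers of elected candidates of the two types
differ by exactly `h mod 2`. Allocations are represented by the finset of elected
candidates. -/
def CondA (I : TypedInstance n C) (E : Finset C) : Prop :=
  (((E.filter fun c => I.mtype c = MType.f).card : ℤ) -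
    ((E.filter fun c => I.mtype c = MType.m).card : ℤ)).natAbs = I.h % 2

instance (I : TypedInstance n C) (E : Finset C) : Decidable (I.CondA E) := by
  unfold CondA; infer_instance

/-- The number of elected candidates of each party. -/
def partyCount (I : TypedInstance n C) (E : Finset C) : Fin n → ℕ :=
  fun i => (E.filter fun c => I.party c = i).card

/-- The number of elected candidates of each type. -/
def typeCount (I : TypedInstance n C) (E : Finset C) : MType → ℕ :=
  fun t => (E.filter fun c => I.mtype c = t).card

/-- Party proportionality condition (B) w.r.t. a signpost sequence `γ`. -/
def CondB (I : TypedInstance n C) (γ : ℕ → ℝ) (E : Finset C) : Prop :=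
  ∃ J ∈ divisorSet γ I.Q I.h, ∀ i, I.partyCount E i = J i

/-- The set `X(I, γ)` of feasible allocations. -/
def X (I : TypedInstance n C) (γ : ℕ → ℝ) : Set (Finset C) :=
  {E | I.CondA E ∧ I.CondB γ E}

/-- The polytope `Z(I, J, γ)` of fractional allocations. -/
def Z (I : TypedInstance n C) (J : Fin n → ℕ) : Set (Fin n → MType → ℝ) :=
  {y | (∀ t : MType, ((I.h / 2 : ℕ) : ℝ) ≤ ∑ i, y i t) ∧
       (∀ i : Fin n, y i MType.f + y i MType.m = (J i : ℝ)) ∧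
       (∀ (i : Fin n) (t : MType), 0 ≤ y i t ∧ y i t ≤ ((I.Cit i t).card : ℝ))}

/-- The scaled instance `αI` (same candidate order). -/
def scale (I : TypedInstance n C) (α : ℝ) (hα : 0 < α) : TypedInstance n C where
  ord := I.ord
  party := I.party
  votes := fun c => α * I.votes c
  votes_nonneg := fun c => mul_nonneg hα.le (I.votes_nonneg c)
  mtype := I.mtype
  h := I.h
  h_pos := I.h_pos
  refines := fun c c' hlt => I.refines c c' (lt_of_mul_lt_mul_left hlt hα.le)

/-- `G` is a voting increment of `I` in candidate `c`: identical to `I` except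
that `c` garners strictly more votes. -/
def VotingIncrement (I G : TypedInstance n C) (c : C) : Prop :=
  G.party = I.party ∧ G.mtype = I.mtype ∧ G.h = I.h ∧
  I.votes c < G.votes c ∧ ∀ c' : C, c' ≠ c → G.votes c' = I.votes c'

/-- The rank of a candidate in the order `≻`: position `1` is the top candidate. -/
def rank (I : TypedInstance n C) (c : C) : ℕ :=
  letI := I.ord
  (univ.filter fun c' => c ≤ c').card

/-- The top `k` candidates of a subset `D` according to the order of `I`. -/
def topOf (I : TypedInstance n C) (D : Finset C) (k : ℕ) : Finset C :=
  letI := I.ord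
  D.filter fun c => (D.filter fun c' => c ≤ c').card ≤ k

/-- The type-oblivious solution `T_J`: in every party `i`, the top `J i`
candidates of `C_i` are elected. -/
def oblivious (I : TypedInstance n C) (J : Fin n → ℕ) : Finset C :=
  univ.filter fun c => c ∈ I.topOf (I.Ci (I.party c)) (J (I.party c))

/-- The over-represented type of an allocation (type `f` in case of a tie). -/
def overType (I : TypedInstance n C) (E : Finset C) : MType :=
  if I.typeCount E MType.m ≤ I.typeCount E MType.f then MType.f else MType.m

/-- One parity-correction swap: the worst-ranked elected candidate of the
over-represented type is replaced by the best-ranked unelected candidate of the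
same party and of the under-represented type (if any; otherwise nothing happens). -/
def swapStep (I : TypedInstance n C) (E : Finset C) : Finset C :=
  letI := I.ord
  let t := I.overType E
  let elected := E.filter fun c => I.mtype c = t
  if hE : elected.Nonempty then
    let s := elected.min' hE
    let pool := univ.filter fun c => c ∉ E ∧ I.party c = I.party s ∧ I.mtype c = t.other
    if hp : pool.Nonempty then insert (pool.max' hp) (E.erase s) else E
  else E

/-- The parity-correction loop (with fuel). -/
def greedyAux (I : TypedInstance n C) : ℕ → Finset C → Finset C
  | 0, E => E
  | k + 1, E => if I.CondA E then E else greedyAux I k (I.swapStep E)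

/-- The output `E_J` of the greedy & parity correction algorithm. -/
def greedy (I : TypedInstance n C) (J : Fin n → ℕ) : Finset C :=
  greedyAux I I.h (I.oblivious J)

/-- The greedy & parity correction mechanism `M^G`. -/
def MG (I : TypedInstance n C) (γ : ℕ → ℝ) : Set (Finset C) :=
  {E | ∃ J ∈ divisorSet γ I.Q I.h, E = I.greedy J}

/-- Two allocations agree on all candidates of rank at most `l`. -/
def agreeUpTo (I : TypedInstance n C) (E₁ E₂ : Finset C) (l : ℕ) : Prop :=
  ∀ c : C, I.rank c ≤ l → (c ∈ E₁ ↔ c ∈ E₂)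

instance (I : TypedInstance n C) (E₁ E₂ : Finset C) (l : ℕ) :
    Decidable (I.agreeUpTo E₁ E₂ l) := by
  unfold agreeUpTo; infer_instance

/-- The length of the common prefix of two allocations (w.r.t. the ranking). -/
def prefixLen (I : TypedInstance n C) (E₁ E₂ : Finset C) : ℕ :=
  ((Finset.range (Fintype.card C + 1)).filter fun l => I.agreeUpTo E₁ E₂ l).sup id

/-- The vote-leading type (type `f` in case of a tie; this tie-breaking rule is
scaling invariant). -/
noncomputable def voteLeading (I : TypedInstance n C) : MType :=
  if (∑ c ∈ I.Ct MType.f, I.votes c) < (∑ c ∈ I.Ct MType.m, I.votes c) then MType.m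
  else MType.f

/-- The parity marginal `φ(I)`: for even `h` both types get `h/2`; for odd `h` the
vote-leading type gets `⌈h/2⌉`. -/
noncomputable def parityMarginal (I : TypedInstance n C) : MType → ℕ :=
  fun t => if t = I.voteLeading then (I.h + 1) / 2 else I.h / 2

end TypedInstance

/-- `(x, lam, mu)` is a `δ`-biproportional solution of the two-dimensional
instance with supply `(P, S, J, φ)`. -/
def IsBipropSol (δ : ℕ → ℝ) {n : ℕ} (P : Fin n → MType → ℝ) (S : Fin n → MType → ℕ)
    (J : Fin n → ℕ) (φ : MType → ℕ) (x : Fin n → MType → ℕ)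
    (lam : Fin n → ℝ) (mu : MType → ℝ) : Prop :=
  (∀ i, 0 < lam i) ∧ (∀ t, 0 < mu t) ∧
  (∀ (i : Fin n) (t : MType), x i t < S i t → x i t ∈ roundSet δ (P i t * lam i * mu t)) ∧
  (∀ i : Fin n, x i MType.f + x i MType.m = J i) ∧
  (∀ t : MType, (∑ i, x i t) = φ t) ∧
  (∀ (i : Fin n) (t : MType), x i t ≤ S i t)

/-- The set `B_δ(P, S, J, φ)` of `δ`-biproportional solutions. -/
def bipropSet (δ : ℕ → ℝ) {n : ℕ} (P : Fin n → MType → ℝ) (S : Fin n → MType → ℕ)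
    (J : Fin n → ℕ) (φ : MType → ℕ) : Set (Fin n → MType → ℕ) :=
  {x | ∃ lam mu, IsBipropSol δ P S J φ x lam mu}

/-- `δ`-biproportional solutions of a two-dimensional instance `(P, J, φ)`
without supply bounds. -/
def IsBipropSolNS (δ : ℕ → ℝ) {n : ℕ} (P : Fin n → MType → ℝ)
    (J : Fin n → ℕ) (φ : MType → ℕ) (x : Fin n → MType → ℕ)
    (lam : Fin n → ℝ) (mu : MType → ℝ) : Prop :=
  (∀ i, 0 < lam i) ∧ (∀ t, 0 < mu t) ∧
  (∀ (i : Fin n) (t : MType), x i t ∈ roundSet δ (P i t * lam i * mu t)) ∧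
  (∀ i : Fin n, x i MType.f + x i MType.m = J i) ∧
  (∀ t : MType, (∑ i, x i t) = φ t)

/-- The set `B_δ(P, J, φ)` for instances without supply bounds. -/
def bipropSetNS (δ : ℕ → ℝ) {n : ℕ} (P : Fin n → MType → ℝ)
    (J : Fin n → ℕ) (φ : MType → ℕ) : Set (Fin n → MType → ℕ) :=
  {x | ∃ lam mu, IsBipropSolNS δ P J φ x lam mu}

/-- `F` is a fair share (matrix scaling) of the two-dimensional instance
`(P, J, φ)`. -/
def IsFairShare {n : ℕ} (P : Fin n → MType → ℝ) (J : Fin n → ℕ) (φ : MType → ℕ)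
    (F : Fin n → MType → ℝ) : Prop :=
  ∃ (lam : Fin n → ℝ) (mu : MType → ℝ),
    (∀ i, 0 < lam i) ∧ (∀ t, 0 < mu t) ∧ (∀ i t, 0 < F i t) ∧
    (∀ (i : Fin n) (t : MType), F i t = P i t * lam i * mu t) ∧
    (∀ i : Fin n, F i MType.f + F i MType.m = (J i : ℝ)) ∧
    (∀ t : MType, (∑ i, F i t) = (φ t : ℝ))

namespace TypedInstance

variable {n : ℕ} {C : Type} [Fintype C] [DecidableEq C]

/-- The allocation `E_x` electing, for every party `i` and type `t`, the top
`x i t` candidates of `C_i^t`. -/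
def allocOf (I : TypedInstance n C) (x : Fin n → MType → ℕ) : Finset C :=
  univ.filter fun c =>
    c ∈ I.topOf (I.Cit (I.party c) (I.mtype c)) (x (I.party c) (I.mtype c))

/-- The `δ`-biproportional parity mechanism `M^B_δ`. -/
def MB (I : TypedInstance n C) (δ γ : ℕ → ℝ) : Set (Finset C) :=
  {E | ∃ J ∈ divisorSet γ I.Q I.h,
        ∃ x ∈ bipropSet δ I.P I.S J I.parityMarginal, E = I.allocOf x}

end TypedInstance

/-!
An allocation is determined, up to which candidates fill each cell, by its cell counts
`x i t ≤ |C_i^t|`; since it has `h` seats, parity (A) says exactly that each type gets at least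
`⌊h/2⌋`. So feasible allocations realise precisely the integer points of `Z`. Eliminating
`y i m = J i - y i f`, the polytope `Z` becomes a box in the `f`-column cut by the slab
`⌊h/2⌋ ≤ ∑ i, y i f ≤ ∑ i, J i - ⌊h/2⌋`; all its data are integers, so if it has a real point it
has an integer one, found by filling the coordinates greedily.
-/

theorem Finset.exists_le_le_sum_eq {ι : Type*} [DecidableEq ι] (s : Finset ι)
    (lo hi : ι → ℕ) (hlohi : ∀ i ∈ s, lo i ≤ hi i) (m : ℕ)
    (hlo : ∑ i ∈ s, lo i ≤ m) (hhi : m ≤ ∑ i ∈ s, hi i) :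
    ∃ z : ι → ℕ, (∀ i ∈ s, lo i ≤ z i ∧ z i ≤ hi i) ∧ ∑ i ∈ s, z i = m := by
  induction s using Finset.induction_on generalizing m with
  | empty => exact ⟨lo, by simp, by simp only [sum_empty] at hhi ⊢; omega⟩
  | insert a s ha ih =>
    rw [sum_insert ha] at hlo hhi
    have hlohi_s : ∀ i ∈ s, lo i ≤ hi i := fun i hi' => hlohi i (mem_insert_of_mem hi')
    have hlohi_a := hlohi a (mem_insert_self a s)
    have hsum_s := sum_le_sum hlohi_s
    -- Give `a` as much as possible; the rest still fits between the sums over `s`.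
    obtain ⟨za, hza⟩ : ∃ za, za = min (hi a) (m - ∑ i ∈ s, lo i) := ⟨_, rfl⟩
    obtain ⟨z, hz, hzsum⟩ := ih hlohi_s (m - za) (by omega) (by omega)
    refine ⟨Function.update z a za, ?_, ?_⟩
    · intro i hi'
      rcases eq_or_ne i a with rfl | hia
      · simp only [Function.update_self]; omega
      · rw [Function.update_of_ne hia]
        exact hz i ((mem_insert.mp hi').resolve_left hia)
    · rw [sum_insert ha, Function.update_self,
        sum_congr rfl fun i hi' => Function.update_of_ne (ne_of_mem_of_not_mem hi' ha) _ _]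
      omega

theorem exists_nat_le_le_of_real {ι : Type*} [Fintype ι] [DecidableEq ι]
    (lo hi : ι → ℕ) (k K : ℕ) (y : ι → ℝ) (hy : ∀ i, (lo i : ℝ) ≤ y i ∧ y i ≤ hi i)
    (hk : (k : ℝ) ≤ ∑ i, y i) (hK : ∑ i, y i ≤ K) :
    ∃ z : ι → ℕ, (∀ i, lo i ≤ z i ∧ z i ≤ hi i) ∧ k ≤ ∑ i, z i ∧ ∑ i, z i ≤ K := by
  have hlohi : ∀ i ∈ univ, lo i ≤ hi i := fun i _ => by exact_mod_cast (hy i).1.trans (hy i).2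
  have hloK : ∑ i, lo i ≤ K := by
    exact_mod_cast (Nat.cast_sum univ lo).trans_le
      ((sum_le_sum fun i _ => (hy i).1).trans hK)
  have hkhi : k ≤ ∑ i, hi i := by
    exact_mod_cast hk.trans ((sum_le_sum fun i _ => (hy i).2).trans (Nat.cast_sum univ hi).ge)
  have hkK : k ≤ K := by exact_mod_cast hk.trans hK
  obtain ⟨z, hz, hzsum⟩ := univ.exists_le_le_sum_eq lo hi hlohi (max k (∑ i, lo i))
    (le_max_right _ _) (max_le hkhi (sum_le_sum hlohi))
  exact ⟨z, fun i => hz i (mem_univ i), by omega, by omega⟩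

namespace TypedInstance

variable {n : ℕ} {C : Type} [Fintype C] [DecidableEq C] (I : TypedInstance n C) (E : Finset C)

def cellCount (i : Fin n) (t : MType) : ℕ :=
  (E.filter fun c => I.party c = i ∧ I.mtype c = t).card

theorem cellCount_f_add_cellCount_m (i : Fin n) :
    I.cellCount E i .f + I.cellCount E i .m = I.partyCount E i := by
  simp only [cellCount, partyCount, card_filter, ← sum_add_distrib]
  refine sum_congr rfl fun c _ => ?_
  cases I.mtype c <;> split_ifs <;> simp_all

theorem sum_cellCount (t : MType) : ∑ i, I.cellCount E i t = I.typeCount E t := by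
  simp only [cellCount, typeCount, card_filter]
  rw [sum_comm]
  refine sum_congr rfl fun c _ => ?_
  by_cases hc : I.mtype c = t <;> simp [hc]

theorem sum_partyCount : ∑ i, I.partyCount E i = E.card := by
  simp only [partyCount, card_filter]
  rw [sum_comm, card_eq_sum_ones]
  refine sum_congr rfl fun c _ => ?_
  simp

theorem typeCount_f_add_typeCount_m : I.typeCount E .f + I.typeCount E .m = E.card := by
  simp only [typeCount, card_filter, ← sum_add_distrib, card_eq_sum_ones E]
  refine sum_congr rfl fun c _ => ?_
  cases I.mtype c <;> simp

theorem cellCount_le_card_Cit (i : Fin n) (t : MType) : I.cellCount E i t ≤ (I.Cit i t).card :=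
  card_le_card fun c hc => by simpa [Cit] using (mem_filter.mp hc).2

theorem condA_iff (hE : E.card = I.h) :
    I.CondA E ↔ I.h / 2 ≤ I.typeCount E .f ∧ I.h / 2 ≤ I.typeCount E .m := by
  have := I.typeCount_f_add_typeCount_m E
  unfold CondA typeCount at *
  omega

theorem card_eq_h_of_partyCount_eq {J : Fin n → ℕ} (hJ : ∑ i, J i = I.h)
    (hE : ∀ i, I.partyCount E i = J i) : E.card = I.h := by
  rw [← I.sum_partyCount, ← hJ]
  exact sum_congr rfl fun i _ => hE i

theorem cellCount_mem_Z {J : Fin n → ℕ} (hJ : ∑ i, J i = I.h) (hA : I.CondA E)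
    (hE : ∀ i, I.partyCount E i = J i) :
    (fun i t => (I.cellCount E i t : ℝ)) ∈ I.Z J := by
  have htype := (I.condA_iff E (I.card_eq_h_of_partyCount_eq E hJ hE)).mp hA
  refine ⟨fun t => ?_, fun i => ?_, fun i t => ⟨Nat.cast_nonneg _, ?_⟩⟩
  · rw [← Nat.cast_sum, Nat.cast_le, sum_cellCount]
    cases t
    exacts [htype.1, htype.2]
  · beta_reduce
    exact_mod_cast (I.cellCount_f_add_cellCount_m E i).trans (hE i)
  · beta_reduce
    exact_mod_cast I.cellCount_le_card_Cit E i t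

theorem exists_cellCount_eq {x : Fin n → MType → ℕ} (hx : ∀ i t, x i t ≤ (I.Cit i t).card) :
    ∃ E : Finset C, ∀ i t, I.cellCount E i t = x i t := by
  choose s hsub hcard using fun i t => exists_subset_card_eq (hx i t)
  refine ⟨univ.filter fun c => c ∈ s (I.party c) (I.mtype c), fun i t => ?_⟩
  rw [← hcard i t, cellCount]
  congr 1
  ext c
  simp only [mem_filter, mem_univ, true_and]
  constructor
  · rintro ⟨hc, rfl, rfl⟩
    exact hc
  · intro hc
    obtain ⟨rfl, rfl⟩ : I.party c = i ∧ I.mtype c = t := by simpa [Cit] using hsub i t hc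
    exact ⟨hc, rfl, rfl⟩

theorem exists_partyCount_eq_of_natCast_mem_Z {J : Fin n → ℕ} (hJ : ∑ i, J i = I.h)
    {x : Fin n → MType → ℕ} (hx : (fun i t => (x i t : ℝ)) ∈ I.Z J) :
    ∃ E : Finset C, I.CondA E ∧ ∀ i, I.partyCount E i = J i := by
  simp only [Z, Set.mem_ofPred_eq] at hx
  obtain ⟨hsum, hrow, hbound⟩ := hx
  obtain ⟨E, hE⟩ := I.exists_cellCount_eq (x := x) fun i t => by exact_mod_cast (hbound i t).2
  have hparty : ∀ i, I.partyCount E i = J i := fun i => by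
    rw [← I.cellCount_f_add_cellCount_m, hE, hE]
    exact_mod_cast hrow i
  have htype : ∀ t, I.h / 2 ≤ I.typeCount E t := fun t => by
    rw [← I.sum_cellCount]
    simp only [hE]
    exact_mod_cast hsum t
  refine ⟨E, ?_, hparty⟩
  rw [I.condA_iff E (I.card_eq_h_of_partyCount_eq E hJ hparty)]
  exact ⟨htype _, htype _⟩

theorem exists_natCast_mem_Z {J : Fin n → ℕ} {y : Fin n → MType → ℝ} (hy : y ∈ I.Z J) :
    ∃ x : Fin n → MType → ℕ, (fun i t => (x i t : ℝ)) ∈ I.Z J := by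
  obtain ⟨hsum, hrow, hbound⟩ := hy
  have hhalf : I.h / 2 ≤ ∑ i, J i := by
    have hm_le : ∑ i, y i .m ≤ ∑ i, (J i : ℝ) :=
      sum_le_sum fun i _ => by linarith [hrow i, (hbound i .f).1]
    exact_mod_cast (hsum .m).trans (hm_le.trans (Nat.cast_sum _ _).ge)
  have hbox : ∀ i, ((J i - (I.Cit i .m).card : ℕ) : ℝ) ≤ y i .f ∧
      y i .f ≤ (min (J i) (I.Cit i .f).card : ℕ) := fun i => by
    have hrow_i := hrow i
    have hf := hbound i .f
    have hm := hbound i .m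
    refine ⟨?_, by rw [Nat.cast_min]; exact le_min (by linarith) hf.2⟩
    rcases le_total (J i) (I.Cit i .m).card with h | h
    · rw [Nat.sub_eq_zero_of_le h, Nat.cast_zero]; linarith
    · rw [Nat.cast_sub h]; linarith
  have hslab : ∑ i, y i .f ≤ (∑ i, J i - I.h / 2 : ℕ) := by
    have hm := hsum .m
    have htotal : ∑ i, (y i .f + y i .m) = ∑ i, (J i : ℝ) := sum_congr rfl fun i _ => hrow i
    rw [sum_add_distrib] at htotal
    rw [Nat.cast_sub hhalf, Nat.cast_sum]
    linarith
  obtain ⟨z, hz, hzlo, hzhi⟩ := exists_nat_le_le_of_real _ _ _ _ _ hbox (hsum .f) hslab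
  have hzJ : ∀ i, z i ≤ J i := fun i => (hz i).2.trans (min_le_left _ _)
  refine ⟨fun i => fun | .f => z i | .m => J i - z i, fun t => ?_, fun i => ?_, fun i t => ?_⟩
  · rw [← Nat.cast_sum, Nat.cast_le]
    cases t
    · exact hzlo
    · show I.h / 2 ≤ ∑ i, (J i - z i)
      rw [sum_tsub_distrib _ fun i _ => hzJ i]
      omega
  · beta_reduce
    exact_mod_cast Nat.add_sub_cancel' (hzJ i)
  · refine ⟨Nat.cast_nonneg _, Nat.cast_le.mpr ?_⟩
    have hz_i := hz i
    cases t
    · exact hz_i.2.trans (min_le_right _ _)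
    · show J i - z i ≤ _
      omega

end TypedInstance

theorem stmt3_general {n : ℕ} {C : Type} [Fintype C] [DecidableEq C]
    (γ : ℕ → ℝ) (I : TypedInstance n C)
    (J : Fin n → ℕ) (hJ : J ∈ divisorSet γ I.Q I.h) :
    (∃ E : Finset C, I.CondA E ∧ ∀ i, I.partyCount E i = J i) ↔ (I.Z J).Nonempty := by
  constructor
  · rintro ⟨E, hA, hE⟩
    exact ⟨_, I.cellCount_mem_Z E hJ.1 hA hE⟩
  · rintro ⟨y, hy⟩
    obtain ⟨x, hx⟩ := I.exists_natCast_mem_Z hy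
    exact I.exists_partyCount_eq_of_natCast_mem_Z hJ.1 hx

/-- feasibility is equivalent to nonemptiness of the polytope `Z(I, J, γ)`. -/
theorem stmt3 {n : ℕ} {C : Type} [Fintype C] [DecidableEq C]
    (γ : ℕ → ℝ) (hγ : Signpost γ) (I : TypedInstance n C)
    (J : Fin n → ℕ) (hJ : J ∈ divisorSet γ I.Q I.h) :
    (∃ E : Finset C, I.CondA E ∧ ∀ i, I.partyCount E i = J i) ↔ (I.Z J).Nonempty :=
  stmt3_general γ I J hJ
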